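/- For every k ∈ {1,2,3}, every t ∈ ℝ, and every Θ, the basis vector e_Θ is a simultaneous eigenvector of r̂_k(t)² and p̂_k(t)² with eigenvalue p − q(Θ) + θ_k: r̂_k(t)² e_Θ = p̂_k(t)² e_Θ = (p − q(Θ) + θ_k) e_Θ. -/

import Mathlib

open scoped BigOperators
open Finset

/-- Index set: triples Θ = (θ₁,θ₂,θ₃) with θᵢ ∈ {0,1}. -/
abbrev WIdx := Fin 3 → Fin 2

/-- The 8-dimensional state space V = EuclideanSpace ℂ ({0,1}³). -/
abbrev WV := EuclideanSpace ℂ WIdx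

/-- Orthonormal basis vector e_Θ. -/
noncomputable def eV (Θ : WIdx) : WV := EuclideanSpace.single Θ 1

/-- The basis (e_Θ)_Θ of V, as a `Basis`. -/
noncomputable def bV : Module.Basis WIdx ℂ WV := (EuclideanSpace.basisFun WIdx ℂ).toBasis

/-- q(Θ) = θ₁ + θ₂ + θ₃. -/
def qv (Θ : WIdx) : ℕ := ∑ j, (Θ j : ℕ)

/-- Sign factor (−1)^(θ₁ + ⋯ + θ_{i−1}). -/
def sgnBelow (i : Fin 3) (Θ : WIdx) : ℂ :=
  (-1 : ℂ) ^ (∑ j : Fin 3, if (j : ℕ) < (i : ℕ) then (Θ j : ℕ) else 0)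

/-- Sign factor (−1)^(θ₁ + ⋯ + θ_i). -/
def sgnUpTo (i : Fin 3) (Θ : WIdx) : ℂ :=
  (-1 : ℂ) ^ (∑ j : Fin 3, if (j : ℕ) ≤ (i : ℕ) then (Θ j : ℕ) else 0)

/-- A_i⁻ e_Θ = θ_i (−1)^(θ₁+⋯+θ_{i−1}) √(p−q(Θ)+1) e_{Θ[θ_i↦0]}. -/
noncomputable def Aminus (p : ℕ) (i : Fin 3) : WV →ₗ[ℂ] WV :=
  bV.constr ℂ fun Θ =>
    (((Θ i : ℕ) : ℂ) * sgnBelow i Θ *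
      ((Real.sqrt ((p : ℝ) - (qv Θ : ℝ) + 1) : ℝ) : ℂ)) • eV (Function.update Θ i 0)

/-- A_i⁺ e_Θ = (1−θ_i) (−1)^(θ₁+⋯+θ_{i−1}) √(p−q(Θ)) e_{Θ[θ_i↦1]}. -/
noncomputable def Aplus (p : ℕ) (i : Fin 3) : WV →ₗ[ℂ] WV :=
  bV.constr ℂ fun Θ =>
    (((1 : ℂ) - ((Θ i : ℕ) : ℂ)) * sgnBelow i Θ *
      ((Real.sqrt ((p : ℝ) - (qv Θ : ℝ)) : ℝ) : ℂ)) • eV (Function.update Θ i 1)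

/-- Anticommutator {X,Y} = XY + YX. -/
noncomputable def acommOp (X Y : WV →ₗ[ℂ] WV) : WV →ₗ[ℂ] WV := X ∘ₗ Y + Y ∘ₗ X

/-- Commutator [X,Y] = XY − YX. -/
noncomputable def commOp (X Y : WV →ₗ[ℂ] WV) : WV →ₗ[ℂ] WV := X ∘ₗ Y - Y ∘ₗ X

/-- Dimensionless Hamiltonian ĥ = Σᵢ {A_i⁺, A_i⁻}. -/
noncomputable def hOp (p : ℕ) : WV →ₗ[ℂ] WV := ∑ i, acommOp (Aplus p i) (Aminus p i)

/-- Position operator r̂_k(t) = e^{−it} A_k⁺ + e^{it} A_k⁻. -/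
noncomputable def rOp (p : ℕ) (k : Fin 3) (t : ℝ) : WV →ₗ[ℂ] WV :=
  Complex.exp (-(t : ℂ) * Complex.I) • Aplus p k +
    Complex.exp ((t : ℂ) * Complex.I) • Aminus p k

/-- Momentum operator p̂_k(t) = −i (e^{−it} A_k⁺ − e^{it} A_k⁻). -/
noncomputable def pOp (p : ℕ) (k : Fin 3) (t : ℝ) : WV →ₗ[ℂ] WV :=
  (-Complex.I) • (Complex.exp (-(t : ℂ) * Complex.I) • Aplus p k -
    Complex.exp ((t : ℂ) * Complex.I) • Aminus p k)

/-- Levi-Civita symbol ε_{jkl} with ε_{123} = 1 (indices 0,1,2 here). -/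
def eps (j k l : Fin 3) : ℂ :=
  if (j, k, l) = (0, 1, 2) ∨ (j, k, l) = (1, 2, 0) ∨ (j, k, l) = (2, 0, 1) then 1
  else if (j, k, l) = (2, 1, 0) ∨ (j, k, l) = (1, 0, 2) ∨ (j, k, l) = (0, 2, 1) then -1
  else 0

/-- Angular momentum M_j = −i Σ_{k,l} ε_{jkl} {A_k⁺, A_l⁻}. -/
noncomputable def Mop (p : ℕ) (j : Fin 3) : WV →ₗ[ℂ] WV :=
  (-Complex.I) • ∑ k, ∑ l, eps j k l • acommOp (Aplus p k) (Aminus p l)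

/-- Eigenvectors v_k(Θ,t) of the position operator r̂_k(t). -/
noncomputable def vVec (k : Fin 3) (t : ℝ) (Θ : WIdx) : WV :=
  (((Real.sqrt 2)⁻¹ : ℝ) : ℂ) •
    (eV (Function.update Θ k 0) +
      (sgnUpTo k Θ * Complex.exp (-(t : ℂ) * Complex.I)) • eV (Function.update Θ k 1))

/-- Eigenvectors ṽ_k(Θ,t) of the momentum operator p̂_k(t). -/
noncomputable def vTilde (k : Fin 3) (t : ℝ) (Θ : WIdx) : WV :=
  (((Real.sqrt 2)⁻¹ : ℝ) : ℂ) •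
    (eV (Function.update Θ k 0) -
      (Complex.I * sgnUpTo k Θ * Complex.exp (-(t : ℂ) * Complex.I)) • eV (Function.update Θ k 1))

/-- The non-stationary state z = (1/√2)(e_{(0,0,0)} + e_{(0,0,1)}). -/
noncomputable def zState : WV :=
  (((Real.sqrt 2)⁻¹ : ℝ) : ℂ) • (eV ![0, 0, 0] + eV ![0, 0, 1])

/-- The state x₁ = (1/√2)(e_{(0,1,0)} + e_{(1,1,0)}). -/
noncomputable def x1State : WV :=
  (((Real.sqrt 2)⁻¹ : ℝ) : ℂ) • (eV ![0, 1, 0] + eV ![1, 1, 0])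

local notation "⟪" x ", " y "⟫" => @inner ℂ _ _ x y


/-
Both squares reduce to the anticommutator {A_k⁺, A_k⁻}: the operators A_k⁺ and A_k⁻ square to zero,
and the scalars in front of them multiply to one (e^{−it}·e^{it} for r̂_k(t), and
(−i e^{−it})·(i e^{it}) for p̂_k(t)). On e_Θ only one term of the anticommutator survives,
namely A_k⁻A_k⁺ if θ_k = 0 and A_k⁺A_k⁻ if θ_k = 1, and the two square roots it produces combine to
p − q(Θ) + θ_k.
-/

lemma LinearMap.smul_add_smul_comp_self {R M : Type*} [CommRing R] [AddCommGroup M]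
    [Module R M] {X Y : M →ₗ[R] M} (hX : X ∘ₗ X = 0) (hY : Y ∘ₗ Y = 0) {a b : R}
    (hab : a * b = 1) :
    (a • X + b • Y) ∘ₗ (a • X + b • Y) = X ∘ₗ Y + Y ∘ₗ X := by
  simp only [LinearMap.add_comp, LinearMap.comp_add, LinearMap.smul_comp, LinearMap.comp_smul,
    hX, hY, smul_zero, smul_smul, zero_add, add_zero]
  rw [mul_comm b a, hab, one_smul, one_smul, add_comm]

lemma bV_apply (Θ : WIdx) : bV Θ = eV Θ := by
  simp [bV, eV, EuclideanSpace.basisFun_apply]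

lemma Aminus_eV (p : ℕ) (i : Fin 3) (Θ : WIdx) :
    Aminus p i (eV Θ) = (((Θ i : ℕ) : ℂ) * sgnBelow i Θ *
      ((Real.sqrt ((p : ℝ) - (qv Θ : ℝ) + 1) : ℝ) : ℂ)) • eV (Function.update Θ i 0) := by
  rw [← bV_apply]
  exact bV.constr_basis ℂ _ Θ

lemma Aplus_eV (p : ℕ) (i : Fin 3) (Θ : WIdx) :
    Aplus p i (eV Θ) = (((1 : ℂ) - ((Θ i : ℕ) : ℂ)) * sgnBelow i Θ *
      ((Real.sqrt ((p : ℝ) - (qv Θ : ℝ)) : ℝ) : ℂ)) • eV (Function.update Θ i 1) := by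
  rw [← bV_apply]
  exact bV.constr_basis ℂ _ Θ

lemma sgnBelow_mul_self (i : Fin 3) (Θ : WIdx) : sgnBelow i Θ * sgnBelow i Θ = 1 := by
  rw [sgnBelow, ← mul_pow]
  norm_num

lemma sgnBelow_update_self (i : Fin 3) (Θ : WIdx) (c : Fin 2) :
    sgnBelow i (Function.update Θ i c) = sgnBelow i Θ := by
  unfold sgnBelow
  congr 1
  refine Finset.sum_congr rfl fun j _ => ?_
  split_ifs with hj
  · rw [Function.update_of_ne (Fin.ne_of_lt hj)]
  · rfl

lemma qv_update_add (Θ : WIdx) (i : Fin 3) (c : Fin 2) :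
    qv (Function.update Θ i c) + (Θ i : ℕ) = qv Θ + (c : ℕ) := by
  unfold qv
  rw [Fin.sum_univ_three, Fin.sum_univ_three]
  fin_cases i <;> simp [Function.update_of_ne] <;> ring

lemma qv_le_three (Θ : WIdx) : qv Θ ≤ 3 :=
  (Finset.sum_le_sum fun j _ => Fin.is_le (Θ j)).trans_eq (by simp)

section Ladder

variable (p : ℕ) (k : Fin 3)

lemma Aplus_comp_self : Aplus p k ∘ₗ Aplus p k = 0 :=
  bV.ext fun Θ => by simp [bV_apply, Aplus_eV]

lemma Aminus_comp_self : Aminus p k ∘ₗ Aminus p k = 0 :=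
  bV.ext fun Θ => by simp [bV_apply, Aminus_eV]

lemma rOp_comp_self (t : ℝ) :
    rOp p k t ∘ₗ rOp p k t = acommOp (Aplus p k) (Aminus p k) := by
  refine LinearMap.smul_add_smul_comp_self (Aplus_comp_self p k) (Aminus_comp_self p k) ?_
  rw [← Complex.exp_add]
  simp

lemma pOp_comp_self (t : ℝ) :
    pOp p k t ∘ₗ pOp p k t = acommOp (Aplus p k) (Aminus p k) := by
  have hp : pOp p k t = (-Complex.I * Complex.exp (-(t : ℂ) * Complex.I)) • Aplus p k +
      (Complex.I * Complex.exp ((t : ℂ) * Complex.I)) • Aminus p k := by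
    simp only [pOp, smul_sub, smul_smul, neg_mul, neg_smul, sub_neg_eq_add]
  rw [hp]
  refine LinearMap.smul_add_smul_comp_self (Aplus_comp_self p k) (Aminus_comp_self p k) ?_
  calc -Complex.I * Complex.exp (-(t : ℂ) * Complex.I) * (Complex.I * Complex.exp (t * Complex.I))
      = -(Complex.I * Complex.I) * Complex.exp (-(t : ℂ) * Complex.I + t * Complex.I) := by
        rw [Complex.exp_add]; ring
    _ = 1 := by simp

/-- The matrix element of A_k⁺ from e_Θ to e_{Θ[θ_k↦1]} (and of A_k⁻ back), when θ_k = 0. -/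
noncomputable def ladderCoeff (Θ : WIdx) : ℂ :=
  sgnBelow k Θ * ((Real.sqrt ((p : ℝ) - (qv Θ : ℝ)) : ℝ) : ℂ)

variable {p k}

lemma ladderCoeff_mul_self {Θ : WIdx} (hq : qv Θ ≤ p) :
    ladderCoeff p k Θ * ladderCoeff p k Θ = (p : ℂ) - (qv Θ : ℂ) := by
  have hsq : ((Real.sqrt ((p : ℝ) - (qv Θ : ℝ)) : ℝ) : ℂ) ^ 2 = (p : ℂ) - (qv Θ : ℂ) := by
    rw [← Complex.ofReal_pow, Real.sq_sqrt (by simpa using (Nat.cast_le (α := ℝ)).2 hq)]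
    push_cast; ring
  unfold ladderCoeff
  linear_combination (((Real.sqrt ((p : ℝ) - (qv Θ : ℝ)) : ℝ) : ℂ) ^ 2) *
    sgnBelow_mul_self k Θ + hsq

lemma Aplus_eV_of_eq_zero {Θ : WIdx} (h : Θ k = 0) :
    Aplus p k (eV Θ) = ladderCoeff p k Θ • eV (Function.update Θ k 1) := by
  simp [Aplus_eV, h, ladderCoeff]

lemma Aminus_eV_update_one {Θ : WIdx} (h : Θ k = 0) :
    Aminus p k (eV (Function.update Θ k 1)) = ladderCoeff p k Θ • eV Θ := by
  have hq : (qv (Function.update Θ k 1) : ℝ) = qv Θ + 1 := by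
    exact_mod_cast by simpa [h] using qv_update_add Θ k 1
  rw [Aminus_eV, Function.update_idem, ← h, Function.update_eq_self, sgnBelow_update_self, hq,
    sub_add_eq_sub_sub, sub_add_cancel]
  simp [ladderCoeff]

lemma Aplus_eV_of_eq_one {Θ : WIdx} (h : Θ k = 1) : Aplus p k (eV Θ) = 0 := by
  simp [Aplus_eV, h]

lemma Aminus_eV_of_eq_zero {Θ : WIdx} (h : Θ k = 0) : Aminus p k (eV Θ) = 0 := by
  simp [Aminus_eV, h]

lemma acommOp_Aplus_Aminus_eV {Θ : WIdx} (hq : qv Θ ≤ p) :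
    acommOp (Aplus p k) (Aminus p k) (eV Θ) =
      ((p : ℂ) - (qv Θ : ℂ) + ((Θ k : ℕ) : ℂ)) • eV Θ := by
  obtain h | h : Θ k = 0 ∨ Θ k = 1 := by omega
  · rw [acommOp, LinearMap.add_apply, LinearMap.comp_apply, LinearMap.comp_apply,
      Aminus_eV_of_eq_zero h, Aplus_eV_of_eq_zero h, map_zero, map_smul,
      Aminus_eV_update_one h, smul_smul, ladderCoeff_mul_self hq, zero_add, h]
    simp
  · set Θ₀ := Function.update Θ k 0
    have h₀ : Θ₀ k = 0 := Function.update_self ..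
    have hΘ : Function.update Θ₀ k 1 = Θ := by
      rw [Function.update_idem, ← h, Function.update_eq_self]
    have hq₀ : qv Θ₀ + 1 = qv Θ := by simpa [h] using qv_update_add Θ k 0
    rw [acommOp, LinearMap.add_apply, LinearMap.comp_apply, LinearMap.comp_apply,
      Aplus_eV_of_eq_one h, map_zero, add_zero, ← hΘ, Aminus_eV_update_one h₀, map_smul,
      Aplus_eV_of_eq_zero h₀, smul_smul, ladderCoeff_mul_self (by omega), hΘ, ← hq₀, h,
      Fin.val_one, Nat.cast_add, Nat.cast_one]
    congr 1
    ring

end Ladder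

/-- r̂_k(t)² e_Θ = p̂_k(t)² e_Θ = (p − q(Θ) + θ_k) e_Θ. -/
theorem stmt6 (p : ℕ) (hp : 3 ≤ p) (k : Fin 3) (t : ℝ) (Θ : WIdx) :
    rOp p k t (rOp p k t (eV Θ)) =
      (((p : ℂ) - (qv Θ : ℂ) + ((Θ k : ℕ) : ℂ))) • eV Θ ∧
    pOp p k t (pOp p k t (eV Θ)) =
      (((p : ℂ) - (qv Θ : ℂ) + ((Θ k : ℕ) : ℂ))) • eV Θ := by
  have hq : qv Θ ≤ p := (qv_le_three Θ).trans hp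
  constructor
  · rw [← LinearMap.comp_apply, rOp_comp_self, acommOp_Aplus_Aminus_eV hq]
  · rw [← LinearMap.comp_apply, pOp_comp_self, acommOp_Aplus_Aminus_eV hq]
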